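/- Let L be a non-returning regular language of state complexity n, with left quotients K_0,…,K_{n-1} indexed by the states Q_n of its minimal DFA. Then for every S ⊆ Q_n the state complexity of the atomic intersection A_S satisfies: κ(A_S) ≤ 2^{n-1} if S = ∅ or S = Q_n, and κ(A_S) ≤ 2 + Σ_{x=1}^{|S|} Σ_{y=1}^{n-|S|} C(n-1,x)·C(n-1-x,y) if ∅ ⊊ S ⊊ Q_n (where C(·,·) denotes binomial coefficients). -/

import Mathlib

/-! A nonempty word `w` acts on the quotients `K i` by a map `δ` that avoids the initial state,
because `L` is non-returning. The quotient of `A_S` by `w` is then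
`⋂_{j ∈ δ(S)} K j ∩ ⋂_{j ∈ δ(Sᶜ)} (K j)ᶜ`, determined by the pair `(δ(S), δ(Sᶜ))` of subsets
of `Q_n ∖ {0}`. For `S = ∅` or `S = Q_n` one of the two is empty and the other is not, which leaves
`2^{n-1} - 1` possibilities besides `A_S` itself. Otherwise an overlapping pair gives the empty
quotient, and a disjoint pair has `1 ≤ |δ(S)| ≤ |S|` and `1 ≤ |δ(Sᶜ)| ≤ n - |S|`; these pairs are
counted by the binomial sum. -/

/-- Left quotient of a language by a word. -/
def leftQuot {α : Type} (L : Set (List α)) (w : List α) : Set (List α) := {x | w ++ x ∈ L}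

/-- The set of left quotients of `L`. -/
def quotients {α : Type} (L : Set (List α)) : Set (Set (List α)) :=
  Set.range (leftQuot L)

/-- The state complexity of `L`: the number of distinct left quotients of `L`. -/
noncomputable def stateComplexity {α : Type} (L : Set (List α)) : ℕ :=
  Nat.card (quotients L)

/-- `L` is non-returning: no quotient by a nonempty word equals `L`. -/
def NonReturning {α : Type} (L : Set (List α)) : Prop :=
  ∀ w : List α, w ≠ [] → leftQuot L w ≠ L

/-- The atomic intersection `A_S = ⋂_{i∈S} K_i ∩ ⋂_{i∉S} K_iᶜ` of a language whose
distinct left quotients are `K_0, …, K_{n-1}`. -/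
def atomInt {α : Type} {n : ℕ} (K : Fin n → Set (List α)) (S : Set (Fin n)) :
    Set (List α) :=
  {w | ∀ i : Fin n, (i ∈ S → w ∈ K i) ∧ (i ∉ S → w ∉ K i)}

open Finset

section Quotients

variable {α : Type}

theorem leftQuot_append (L : Set (List α)) (u w : List α) :
    leftQuot L (u ++ w) = leftQuot (leftQuot L u) w := by
  ext x
  simp [leftQuot]

theorem leftQuot_mem_quotients {L M : Set (List α)} (hM : M ∈ quotients L) (w : List α) :
    leftQuot M w ∈ quotients L := by
  obtain ⟨u, rfl⟩ := hM
  exact ⟨u ++ w, leftQuot_append L u w⟩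

theorem NonReturning.leftQuot_ne {L M : Set (List α)} (hL : NonReturning L)
    (hM : M ∈ quotients L) {w : List α} (hw : w ≠ []) : leftQuot M w ≠ L := by
  obtain ⟨u, rfl⟩ := hM
  rw [← leftQuot_append]
  exact hL _ (by simp [hw])

theorem stateComplexity_le_of_forall_leftQuot_mem {M : Set (List α)} (s : Finset (Set (List α)))
    (h : ∀ w, w ≠ [] → leftQuot M w ∈ s) : stateComplexity M ≤ s.card + 1 := by
  have hsub : quotients M ⊆ insert M ↑s := by
    rintro _ ⟨w, rfl⟩
    rcases eq_or_ne w [] with rfl | hw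
    · left
      ext x
      simp [leftQuot]
    · exact Or.inr (h w hw)
  rw [stateComplexity, Nat.card_coe_set_eq, ← Set.ncard_coe_finset s]
  exact (Set.ncard_le_ncard hsub (s.finite_toSet.insert M)).trans (Set.ncard_insert_le M _)

end Quotients

section PairIntersections

variable {α ι : Type}

def pairInt (K : ι → Set (List α)) (X Y : Finset ι) : Set (List α) :=
  {x | (∀ j ∈ X, x ∈ K j) ∧ ∀ j ∈ Y, x ∉ K j}

theorem atomInt_coe_eq_pairInt {n : ℕ} (K : Fin n → Set (List α)) (S : Finset (Fin n)) :
    atomInt K ↑S = pairInt K S Sᶜ := by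
  ext x
  simp [atomInt, pairInt, forall_and]

theorem leftQuot_pairInt [DecidableEq ι] {K : ι → Set (List α)} {w : List α} {δ : ι → ι}
    (hδ : ∀ i, leftQuot (K i) w = K (δ i)) (X Y : Finset ι) :
    leftQuot (pairInt K X Y) w = pairInt K (X.image δ) (Y.image δ) := by
  ext x
  simp [pairInt, leftQuot, ← hδ]

theorem pairInt_eq_empty_of_not_disjoint {K : ι → Set (List α)} {X Y : Finset ι}
    (h : ¬Disjoint X Y) : pairInt K X Y = ∅ := by
  obtain ⟨j, hjX, hjY⟩ := Finset.not_disjoint_iff.mp h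
  exact Set.eq_empty_of_forall_notMem fun x hx => hx.2 j hjY (hx.1 j hjX)

end PairIntersections

section Counting

variable {β : Type} [DecidableEq β]

theorem card_sigma_powersetCard_sdiff (T : Finset β) (x y : ℕ) :
    ((T.powersetCard x).sigma fun X => (T \ X).powersetCard y).card =
      T.card.choose x * (T.card - x).choose y := by
  rw [card_sigma, sum_congr rfl fun X hX => by
    rw [card_powersetCard, card_sdiff_of_subset (mem_powersetCard.mp hX).1,
      (mem_powersetCard.mp hX).2], sum_const, card_powersetCard, smul_eq_mul]

theorem card_disjoint_pairs_le (T : Finset β) (a b : ℕ) :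
    ((T.powerset ×ˢ T.powerset).filter fun p =>
        Disjoint p.1 p.2 ∧ p.1.card ∈ Icc 1 a ∧ p.2.card ∈ Icc 1 b).card ≤
      ∑ x ∈ Icc 1 a, ∑ y ∈ Icc 1 b, T.card.choose x * (T.card - x).choose y := by
  let pairsOfCard : ℕ × ℕ → Finset (Finset β × Finset β) := fun q =>
    ((T.powersetCard q.1).sigma fun X => (T \ X).powersetCard q.2).image fun p => (p.1, p.2)
  have hsub : ((T.powerset ×ˢ T.powerset).filter fun p =>
      Disjoint p.1 p.2 ∧ p.1.card ∈ Icc 1 a ∧ p.2.card ∈ Icc 1 b) ⊆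
      (Icc 1 a ×ˢ Icc 1 b).biUnion pairsOfCard := by
    rintro ⟨X, Y⟩ hp
    simp only [mem_filter, mem_product, mem_powerset] at hp
    obtain ⟨⟨hX, hY⟩, hdisj, hXcard, hYcard⟩ := hp
    refine mem_biUnion.mpr ⟨(X.card, Y.card), mem_product.mpr ⟨hXcard, hYcard⟩, ?_⟩
    refine mem_image.mpr ⟨⟨X, Y⟩, mem_sigma.mpr ⟨mem_powersetCard.mpr ⟨hX, rfl⟩, ?_⟩, rfl⟩
    exact mem_powersetCard.mpr ⟨subset_sdiff.mpr ⟨hY, hdisj.symm⟩, rfl⟩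
  calc _ ≤ _ := card_le_card hsub
    _ ≤ ∑ q ∈ Icc 1 a ×ˢ Icc 1 b, (pairsOfCard q).card := card_biUnion_le
    _ ≤ ∑ q ∈ Icc 1 a ×ˢ Icc 1 b, T.card.choose q.1 * (T.card - q.1).choose q.2 :=
      sum_le_sum fun q _ => card_image_le.trans (card_sigma_powersetCard_sdiff T q.1 q.2).le
    _ = _ := sum_product _ _ _

end Counting

section Atoms

variable {α : Type} {L : Set (List α)} {n : ℕ} {K : Fin n → Set (List α)} {z : Fin n}

theorem exists_transition (hNR : NonReturning L) (hKrange : Set.range K = quotients L)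
    (hK0 : K z = L) {w : List α} (hw : w ≠ []) :
    ∃ δ : Fin n → Fin n, (∀ i, δ i ≠ z) ∧ ∀ i, leftQuot (K i) w = K (δ i) := by
  have hK : ∀ i, K i ∈ quotients L := fun i => hKrange ▸ Set.mem_range_self i
  choose δ hδ using fun i => hKrange ▸ leftQuot_mem_quotients (hK i) w
  refine ⟨δ, fun i hi => hNR.leftQuot_ne (hK i) hw ?_, fun i => (hδ i).symm⟩
  rw [← hδ i, hi, hK0]

theorem image_subset_erase_of_ne {δ : Fin n → Fin n} (hδ : ∀ i, δ i ≠ z) (X : Finset (Fin n)) :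
    X.image δ ⊆ univ.erase z :=
  image_subset_iff.mpr fun i _ => mem_erase.mpr ⟨hδ i, mem_univ _⟩

theorem card_univ_erase_fin (z : Fin n) : (univ.erase z).card = n - 1 := by
  rw [card_erase_of_mem (mem_univ z), card_univ, Fintype.card_fin]

theorem stateComplexity_le_two_pow_of_leftQuot_eq (z : Fin n) {M : Set (List α)}
    (G : Finset (Fin n) → Set (List α))
    (hG : ∀ w, w ≠ [] → ∃ Y : Finset (Fin n), Y.Nonempty ∧ Y ⊆ univ.erase z ∧ leftQuot M w = G Y) :
    stateComplexity M ≤ 2 ^ (n - 1) := by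
  classical
  have hquot : ∀ w, w ≠ [] → leftQuot M w ∈ ((univ.erase z).powerset.erase ∅).image G := by
    intro w hw
    obtain ⟨Y, hYne, hYz, hY⟩ := hG w hw
    exact mem_image.mpr ⟨Y, mem_erase.mpr ⟨hYne.ne_empty, mem_powerset.mpr hYz⟩, hY.symm⟩
  calc stateComplexity M ≤ (((univ.erase z).powerset.erase ∅).image G).card + 1 :=
        stateComplexity_le_of_forall_leftQuot_mem _ hquot
    _ ≤ ((univ.erase z).powerset.erase ∅).card + 1 := by gcongr; exact card_image_le
    _ = 2 ^ (n - 1) := by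
        rw [card_erase_of_mem (empty_mem_powerset _), card_powerset, card_univ_erase_fin]
        exact Nat.sub_add_cancel Nat.one_le_two_pow

theorem stateComplexity_atomInt_empty_le (hNR : NonReturning L)
    (hKrange : Set.range K = quotients L) (hK0 : K z = L) :
    stateComplexity (atomInt K ∅) ≤ 2 ^ (n - 1) := by
  refine stateComplexity_le_two_pow_of_leftQuot_eq z (pairInt K ∅) fun w hw => ?_
  obtain ⟨δ, hδz, hδ⟩ := exists_transition hNR hKrange hK0 hw
  refine ⟨univ.image δ, univ_nonempty_iff.mpr ⟨z⟩ |>.image δ, image_subset_erase_of_ne hδz _, ?_⟩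
  rw [← coe_empty, atomInt_coe_eq_pairInt, leftQuot_pairInt hδ, compl_empty, image_empty]

theorem stateComplexity_atomInt_univ_le (hNR : NonReturning L)
    (hKrange : Set.range K = quotients L) (hK0 : K z = L) :
    stateComplexity (atomInt K Set.univ) ≤ 2 ^ (n - 1) := by
  refine stateComplexity_le_two_pow_of_leftQuot_eq z (pairInt K · ∅) fun w hw => ?_
  obtain ⟨δ, hδz, hδ⟩ := exists_transition hNR hKrange hK0 hw
  refine ⟨univ.image δ, univ_nonempty_iff.mpr ⟨z⟩ |>.image δ, image_subset_erase_of_ne hδz _, ?_⟩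
  rw [← coe_univ, atomInt_coe_eq_pairInt, leftQuot_pairInt hδ, compl_univ, image_empty]

theorem stateComplexity_atomInt_le (hNR : NonReturning L)
    (hKrange : Set.range K = quotients L) (hK0 : K z = L) {S : Finset (Fin n)}
    (hS : S.Nonempty) (hSc : Sᶜ.Nonempty) :
    stateComplexity (atomInt K ↑S) ≤
      2 + ∑ x ∈ Icc 1 S.card, ∑ y ∈ Icc 1 Sᶜ.card, (n - 1).choose x * (n - 1 - x).choose y := by
  classical
  set D := ((univ.erase z).powerset ×ˢ (univ.erase z).powerset).filter fun p =>
    Disjoint p.1 p.2 ∧ p.1.card ∈ Icc 1 S.card ∧ p.2.card ∈ Icc 1 Sᶜ.card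
  have hquot : ∀ w, w ≠ [] →
      leftQuot (atomInt K ↑S) w ∈ insert ∅ (D.image (Function.uncurry (pairInt K))) := by
    intro w hw
    obtain ⟨δ, hδz, hδ⟩ := exists_transition hNR hKrange hK0 hw
    rw [atomInt_coe_eq_pairInt, leftQuot_pairInt hδ, mem_insert]
    by_cases hdisj : Disjoint (S.image δ) (Sᶜ.image δ)
    · refine Or.inr (mem_image.mpr
        ⟨(S.image δ, Sᶜ.image δ), mem_filter.mpr ⟨?_, hdisj, ?_, ?_⟩, rfl⟩)
      · exact mem_product.mpr ⟨mem_powerset.mpr (image_subset_erase_of_ne hδz S),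
          mem_powerset.mpr (image_subset_erase_of_ne hδz Sᶜ)⟩
      · exact mem_Icc.mpr ⟨card_pos.mpr (hS.image δ), card_image_le⟩
      · exact mem_Icc.mpr ⟨card_pos.mpr (hSc.image δ), card_image_le⟩
    · exact Or.inl (pairInt_eq_empty_of_not_disjoint hdisj)
  calc stateComplexity (atomInt K ↑S)
      ≤ (insert ∅ (D.image (Function.uncurry (pairInt K)))).card + 1 :=
        stateComplexity_le_of_forall_leftQuot_mem _ hquot
    _ ≤ D.card + 2 := by
        have := (card_insert_le ∅ (D.image (Function.uncurry (pairInt K)))).trans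
          (Nat.add_le_add_right card_image_le 1)
        omega
    _ ≤ _ := by
        rw [add_comm 2, ← card_univ_erase_fin z]
        gcongr
        exact card_disjoint_pairs_le _ _ _

end Atoms

/-- Upper bounds on the state complexity of the atomic intersections of a non-returning
language `L` of state complexity `n` (`K` enumerates the distinct left quotients, `K 0 = L`):
`κ(A_S) ≤ 2^{n-1}` for `S = ∅` or `S = Q_n`, and
`κ(A_S) ≤ 2 + Σ_{x=1}^{|S|} Σ_{y=1}^{n-|S|} C(n-1,x) C(n-1-x,y)` otherwise. -/
theorem stmt9 {α : Type} (n : ℕ) (hn : 1 ≤ n)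
    (L : Set (List α)) (hNR : NonReturning L)
    (K : Fin n → Set (List α))
    (hKrange : Set.range K = quotients L) (hK0 : K ⟨0, by omega⟩ = L)
    (S : Set (Fin n)) :
    ((S = ∅ ∨ S = Set.univ) → stateComplexity (atomInt K S) ≤ 2 ^ (n - 1)) ∧
    (S ≠ ∅ ∧ S ≠ Set.univ →
      stateComplexity (atomInt K S) ≤
        2 + ∑ x ∈ Finset.Icc 1 S.ncard, ∑ y ∈ Finset.Icc 1 (n - S.ncard),
          (n - 1).choose x * (n - 1 - x).choose y) := by
  classical
  refine ⟨?_, fun ⟨hS, hSu⟩ => ?_⟩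
  · rintro (rfl | rfl)
    · exact stateComplexity_atomInt_empty_le hNR hKrange hK0
    · exact stateComplexity_atomInt_univ_le hNR hKrange hK0
  · obtain ⟨S, rfl⟩ : ∃ S' : Finset (Fin n), ↑S' = S := ⟨S.toFinset, S.coe_toFinset⟩
    have hScard : Sᶜ.card = n - S.card := by rw [card_compl, Fintype.card_fin]
    rw [Set.ncard_coe_finset, ← hScard]
    refine stateComplexity_atomInt_le hNR hKrange hK0 ?_ ?_
    · exact coe_nonempty.mp (Set.nonempty_iff_ne_empty.mpr hS)
    · rw [← coe_nonempty, coe_compl]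
      exact Set.nonempty_compl.mpr hSu
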